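/- arXiv:2605.28466 — 3 statements merged into one kernel-verified Lean document; each statement's English description precedes it below -/
import Mathlib

section
/- Let K be a compact Hausdorff space, ν a finite complex regular Borel measure on K, and φ : K → ℂ a Borel measurable function with |φ| = 1 |ν|-almost everywhere. Then for every δ > 0 there exists h ∈ C(K) with |h(t)| = 1 for all t ∈ K such that ∫_K |h − φ| d|ν| < δ. -/
open MeasureTheory

lemma abs_exp_mul_I_sub_one_le (t : ℝ) :
    ‖Complex.exp (t * Complex.I) - 1‖ ≤ |t| := by
  have h1 : Complex.exp (t * Complex.I) - 1 =
      Complex.ofReal (Real.cos t - 1) + Complex.ofReal (Real.sin t) * Complex.I := by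
    rw [Complex.exp_mul_I]
    push_cast
    ring
  have hsq : (‖Complex.exp (t * Complex.I) - 1‖)^2 = 2 - 2 * Real.cos t := by
    rw [h1, Complex.sq_norm, Complex.normSq_add_mul_I]
    have := Real.sin_sq_add_cos_sq t
    nlinarith
  have hs : Real.sin (t/2) ^ 2 ≤ (t/2)^2 := by
    have := Real.abs_sin_le_abs (x := t/2)
    nlinarith [abs_nonneg (Real.sin (t/2)), abs_nonneg (t/2), sq_abs (Real.sin (t/2)), sq_abs (t/2)]
  have hcos : Real.cos t = 1 - 2 * Real.sin (t/2)^2 := by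
    have h2 := Real.cos_two_mul' (t/2)
    have h4 := Real.sin_sq_add_cos_sq (t/2)
    rw [show 2 * (t/2) = t by ring] at h2
    linarith
  have h3 : (‖Complex.exp (t * Complex.I) - 1‖)^2 ≤ |t|^2 := by
    rw [hsq, hcos]
    nlinarith [sq_abs t]
  calc ‖Complex.exp (t * Complex.I) - 1‖
      = Real.sqrt ((‖Complex.exp (t * Complex.I) - 1‖)^2) :=
        (Real.sqrt_sq (norm_nonneg _)).symm
    _ ≤ Real.sqrt (|t|^2) := Real.sqrt_le_sqrt h3
    _ = |t| := Real.sqrt_sq (abs_nonneg t)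

lemma abs_exp_mul_I_sub_exp_mul_I_le (x y : ℝ) :
    ‖Complex.exp (x * Complex.I) - Complex.exp (y * Complex.I)‖ ≤ |x - y| := by
  have h1 : Complex.exp (x * Complex.I) - Complex.exp (y * Complex.I) =
      Complex.exp (y * Complex.I) * (Complex.exp ((x - y : ℝ) * Complex.I) - 1) := by
    rw [mul_sub, ← Complex.exp_add, mul_one]
    push_cast
    ring_nf
  rw [h1, norm_mul, Complex.norm_exp_ofReal_mul_I, one_mul]
  exact abs_exp_mul_I_sub_one_le (x - y)

/-- Let `K` be a compact Hausdorff space, `ν` a finite complex regular Borel measure on `K`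
with total variation `m = |ν|` (a finite positive regular Borel measure), and `φ : K → ℂ`
a Borel measurable function with `|φ| = 1` `|ν|`-a.e.  Then for every `δ > 0` there exists
`h ∈ C(K)` with `|h(t)| = 1` for all `t ∈ K` such that `∫_K |h − φ| d|ν| < δ`. -/
theorem exists_unimodular_continuous_L1_approx
    {K : Type*} [TopologicalSpace K] [CompactSpace K] [T2Space K]
    [MeasurableSpace K] [BorelSpace K]
    (m : Measure K) [IsFiniteMeasure m] [m.Regular]
    (φ : K → ℂ) (hφmeas : Measurable φ) (hφ : ∀ᵐ t ∂m, ‖φ t‖ = 1)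
    (δ : ℝ) (hδ : 0 < δ) :
    ∃ h : C(K, ℂ), (∀ t, ‖h t‖ = 1) ∧
      ∫ t, ‖h t - φ t‖ ∂m < δ := by
  set θ : K → ℝ := fun t => (φ t).arg with hθdef
  have hθmeas : Measurable θ := Complex.measurable_arg.comp hφmeas
  have hθint : Integrable θ m := by
    refine ⟨hθmeas.aestronglyMeasurable, ?_⟩
    exact HasFiniteIntegral.of_bounded (C := Real.pi)
      (ae_of_all _ fun t => by simpa [Real.norm_eq_abs] using Complex.abs_arg_le_pi (φ t))
  obtain ⟨g, -, hg_le, hg_cont, hg_int⟩ :=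
    hθint.exists_hasCompactSupport_integral_sub_le (show (0:ℝ) < δ/2 by linarith)
  refine ⟨⟨fun t => Complex.exp (g t * Complex.I), ?_⟩, fun t => Complex.norm_exp_ofReal_mul_I _, ?_⟩
  · exact Complex.continuous_exp.comp
      ((Complex.continuous_ofReal.comp hg_cont).mul continuous_const)
  · have hpt : ∀ᵐ t ∂m,
        ‖Complex.exp (g t * Complex.I) - φ t‖ ≤ |θ t - g t| := by
      filter_upwards [hφ] with t ht
      have hrep : φ t = Complex.exp (θ t * Complex.I) := by
        conv_lhs => rw [← Complex.norm_mul_exp_arg_mul_I (φ t)]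
        rw [ht]
        simp [hθdef]
      rw [hrep, abs_sub_comm (θ t) (g t)]
      exact abs_exp_mul_I_sub_exp_mul_I_le (g t) (θ t)
    have hL : Integrable (fun t => ‖Complex.exp (g t * Complex.I) - φ t‖) m := by
      refine ⟨?_, ?_⟩
      · exact ((Complex.measurable_exp.comp
          ((Complex.measurable_ofReal.comp hg_cont.measurable).mul measurable_const)).sub
          hφmeas).norm.aestronglyMeasurable
      · apply HasFiniteIntegral.of_bounded (C := 2)
        filter_upwards [hφ] with t ht
        have h1 : ‖Complex.exp (g t * Complex.I) - φ t‖ ≤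
            ‖Complex.exp (g t * Complex.I)‖ + ‖φ t‖ :=
          norm_sub_le _ _
        rw [Complex.norm_exp_ofReal_mul_I, ht] at h1
        rw [Real.norm_eq_abs, abs_of_nonneg (norm_nonneg _)]
        linarith
    have hR : Integrable (fun t => |θ t - g t|) m := (hθint.sub hg_int).abs
    calc ∫ t, ‖Complex.exp (g t * Complex.I) - φ t‖ ∂m
        ≤ ∫ t, |θ t - g t| ∂m := integral_mono_ae hL hR hpt
      _ = ∫ t, ‖θ t - g t‖ ∂m := by simp [Real.norm_eq_abs]
      _ ≤ δ/2 := hg_le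
      _ < δ := by linarith
end

section
/- Let K and S be compact Hausdorff spaces and let μ : S → M(K) be weak-star continuous. Then for every δ > 0 there exist h ∈ C(K) with |h(t)| = 1 for all t ∈ K and a nonempty open set U ⊂ S such that Re ∫_K h dμ(s) > ‖μ‖ − δ for every s ∈ U. -/
open MeasureTheory

open Complex Metric intervalIntegral Real

noncomputable def uu (z w : ℂ) : ℂ := (w + z) / (1 + (starRingEnd ℂ) z * w)

lemma uu_den_ne {z w : ℂ} (hz : ‖z‖ < 1) (hw : ‖w‖ ≤ 1) :
    1 + (starRingEnd ℂ) z * w ≠ 0 := by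
  intro h
  have h1 : ‖(starRingEnd ℂ) z * w‖ < 1 := by
    rw [norm_mul, Complex.norm_conj]
    calc ‖z‖ * ‖w‖ ≤ ‖z‖ * 1 := by
          exact mul_le_mul_of_nonneg_left hw (norm_nonneg _)
      _ < 1 := by simpa using hz
  have : (starRingEnd ℂ) z * w = -1 := by linear_combination h
  rw [this] at h1
  simp at h1

lemma uu_unimodular {z w : ℂ} (hz : ‖z‖ < 1) (hw : ‖w‖ = 1) :
    ‖uu z w‖ = 1 := by
  have hw1 : (starRingEnd ℂ) w * w = 1 := by
    rw [mul_comm, Complex.mul_conj]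
    norm_cast
    rw [Complex.normSq_eq_norm_sq, hw]; norm_num
  have hkey : ‖1 + (starRingEnd ℂ) z * w‖ = ‖w + z‖ := by
    have h2 : ‖1 + (starRingEnd ℂ) z * w‖
        = ‖1 + z * (starRingEnd ℂ) w‖ := by
      rw [← Complex.norm_conj]; simp [map_add, map_mul, Complex.conj_conj]
    have h1 : (starRingEnd ℂ) w * (w + z) = 1 + z * (starRingEnd ℂ) w := by
      rw [mul_add, hw1]; ring
    rw [h2, ← h1, norm_mul, Complex.norm_conj, hw, one_mul]
  have hne : 1 + (starRingEnd ℂ) z * w ≠ 0 := uu_den_ne hz hw.le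
  rw [uu, norm_div, ← hkey, div_self]
  exact norm_ne_zero_iff.mpr hne

lemma poisson_avg {z : ℂ} (hz : ‖z‖ < 1) :
    ∫ θ in (0:ℝ)..(2*π), uu z (Complex.exp (θ * Complex.I)) = (2*π : ℝ) • z := by
  have hd : DiffContOnCl ℂ (uu z) (ball (0:ℂ) 1) := by
    have hden : ∀ w ∈ closedBall (0:ℂ) 1, 1 + (starRingEnd ℂ) z * w ≠ 0 := fun w hw =>
      uu_den_ne hz (by simpa using mem_closedBall_zero_iff.mp hw)
    constructor
    · intro w hw
      apply DifferentiableAt.differentiableWithinAt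
      apply DifferentiableAt.div
      · fun_prop
      · fun_prop
      · exact hden w (ball_subset_closedBall hw)
    · apply ContinuousOn.mono (s := closedBall (0:ℂ) 1)
      · apply ContinuousOn.div (by fun_prop) (by fun_prop) hden
      · exact closure_ball_subset_closedBall
  have h := hd.circleIntegral_sub_inv_smul (w := 0) (by simp)
  rw [circleIntegral] at h
  simp only [circleMap, deriv_circleMap, sub_zero, smul_eq_mul, zero_add, one_mul,
    circleMap_zero, Complex.ofReal_one] at h
 
  -- inspect
  have h3 : (∫ θ in (0:ℝ)..(2*π), Complex.I * uu z (Complex.exp (θ * Complex.I)))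
      = 2*(π:ℂ)*Complex.I*uu z 0 := by
    rw [← h]
    apply integral_congr
    intro θ _
    have he : Complex.exp (θ * Complex.I) ≠ 0 := Complex.exp_ne_zero _
    field_simp
  rw [intervalIntegral.integral_const_mul] at h3
  have huz : uu z 0 = z := by simp [uu]
  rw [huz] at h3
  apply mul_left_cancel₀ Complex.I_ne_zero
  rw [h3, Complex.real_smul]
  push_cast
  ring

lemma exists_unimodular_re_ge {K : Type*} [TopologicalSpace K] [CompactSpace K]
    (T : C(K,ℂ) →L[ℂ] ℂ) (f : C(K,ℂ)) (hf : ‖f‖ < 1) :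
    ∃ h : C(K,ℂ), (∀ t, ‖h t‖ = 1) ∧ (T f).re ≤ (T h).re := by
  have hft : ∀ t, ‖f t‖ < 1 := fun t =>
    lt_of_le_of_lt (f.norm_coe_le_norm t) hf
  have hGc : Continuous fun p : ℝ × K =>
      (Complex.exp (p.1 * Complex.I) + f p.2) /
        (1 + (starRingEnd ℂ) (f p.2) * Complex.exp (p.1 * Complex.I)) := by
    apply Continuous.div (by fun_prop)
      (continuous_const.add ((Complex.continuous_conj.comp
        (f.continuous.comp continuous_snd)).mul (by fun_prop)))
    intro p
    exact uu_den_ne (hft p.2) (le_of_eq (Complex.norm_exp_ofReal_mul_I p.1))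
  set G : C(ℝ × K, ℂ) := ⟨_, hGc⟩ with hG
  set F : ℝ → C(K, ℂ) := fun θ => G.curry θ with hFdef
  have hFc : Continuous F := G.curry.continuous
  have hFval : ∀ θ t, F θ t = uu (f t) (Complex.exp (θ * Complex.I)) := fun θ t => rfl
  have hint : IntervalIntegrable F MeasureTheory.volume 0 (2*π) :=
    hFc.intervalIntegrable 0 (2*π)
  have key : (∫ θ in (0:ℝ)..(2*π), F θ) = (2*π : ℝ) • f := by
    ext t
    have h1 := (ContinuousMap.evalCLM ℂ t).intervalIntegral_comp_comm hint
    have h2 : ∀ θ, (ContinuousMap.evalCLM ℂ t) (F θ) = F θ t := fun θ => rfl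
    simp only [h2] at h1
    have h3 : (ContinuousMap.evalCLM ℂ t) (∫ θ in (0:ℝ)..(2*π), F θ)
        = (∫ θ in (0:ℝ)..(2*π), F θ) t := rfl
    rw [h3] at h1
    rw [← h1]
    simp only [hFval]
    rw [poisson_avg (hft t)]
    simp [Complex.real_smul]
  have hTint : IntervalIntegrable (fun θ => T (F θ)) MeasureTheory.volume 0 (2*π) :=
    (T.continuous.comp hFc).intervalIntegrable 0 (2*π)
  have hT : (∫ θ in (0:ℝ)..(2*π), T (F θ)) = T ((2*π : ℝ) • f) := by
    rw [← key]; exact T.intervalIntegral_comp_comm hint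
  set φ : ℝ → ℝ := fun θ => (T (F θ)).re with hφ
  have hφc : Continuous φ := Complex.continuous_re.comp (T.continuous.comp hFc)
  have hre : (∫ θ in (0:ℝ)..(2*π), φ θ) = 2*π*(T f).re := by
    have h4 := Complex.reCLM.intervalIntegral_comp_comm hTint
    have : (∫ θ in (0:ℝ)..(2*π), φ θ) = Complex.reCLM (∫ θ in (0:ℝ)..(2*π), T (F θ)) := by
      rw [← h4]; rfl
    rw [this, hT, T.map_smul_of_tower]
    simp [Complex.smul_re]
  by_contra hcon
  push_neg at hcon
  have hlt : ∀ θ, φ θ < (T f).re := by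
    intro θ
    have := hcon (F θ) (fun t => uu_unimodular (hft t) (Complex.norm_exp_ofReal_mul_I θ))
    simpa [hφ] using this
  obtain ⟨θm, _, hθm⟩ := (isCompact_Icc (a := (0:ℝ)) (b := 2*π)).exists_isMaxOn
    (Set.nonempty_Icc.2 (by positivity)) hφc.continuousOn (f := φ)
  have hle : (∫ θ in (0:ℝ)..(2*π), φ θ) ≤ (∫ _ in (0:ℝ)..(2*π), φ θm) := by
    apply intervalIntegral.integral_mono_on (by positivity)
      (hφc.intervalIntegrable 0 (2*π)) (intervalIntegrable_const)
    exact fun x hx => hθm hx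
  rw [intervalIntegral.integral_const, hre] at hle
  have : 2*π*(T f).re < 2*π*(T f).re :=
    lt_of_le_of_lt hle (by simpa using (mul_lt_mul_of_pos_left (hlt θm) (by positivity : (0:ℝ) < 2*π)))
  exact lt_irrefl _ this

/-- Let `K` and `S` be compact Hausdorff spaces and `μ : S → M(K)` weak-star continuous,
where `M(K) = C(K)*` is realized as the dual of `C(K, ℂ)` (Riesz representation; the dual
norm is the total variation norm, and `∫_K h dμ(s) = μ(s)(h)`).  Then for every `δ > 0`
there exist `h ∈ C(K)` with `|h(t)| = 1` for all `t ∈ K` and a nonempty open set `U ⊆ S`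
such that `Re ∫_K h dμ(s) > ‖μ‖ − δ` for every `s ∈ U`, where `‖μ‖ = sup_{s∈S} ‖μ(s)‖`. -/
theorem exists_unimodular_and_open_re_gt
    {K S : Type*} [TopologicalSpace K] [CompactSpace K] [T2Space K]
    [TopologicalSpace S] [CompactSpace S] [T2Space S] [Nonempty S]
    (μ : S → (C(K, ℂ) →L[ℂ] ℂ)) (hμ : ∀ f : C(K, ℂ), Continuous fun s => μ s f)
    (δ : ℝ) (hδ : 0 < δ) :
    ∃ (h : C(K, ℂ)) (U : Set S), (∀ t, ‖h t‖ = 1) ∧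
      IsOpen U ∧ U.Nonempty ∧
      ∀ s ∈ U, (μ s h).re > (⨆ s' : S, ‖μ s'‖) - δ := by
  set M : ℝ := ⨆ s' : S, ‖μ s'‖ with hM
  have claim : ∃ (s₀ : S) (f : C(K, ℂ)), ‖f‖ < 1 ∧ (μ s₀ f).re > M - δ := by
    by_cases hMδ : M - δ < 0
    · exact ⟨Classical.arbitrary S, 0, by simp [hMδ], by simpa using hMδ⟩
    · push_neg at hMδ
      have hMδ' : δ ≤ M := by linarith
      obtain ⟨s₀, hs₀⟩ : ∃ s₀ : S, M - δ/2 < ‖μ s₀‖ :=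
        exists_lt_of_lt_ciSup (by linarith)
      obtain ⟨g, hg⟩ : ∃ g : C(K, ℂ), (M - 3*δ/4) * ‖g‖ < ‖μ s₀ g‖ := by
        by_contra hcon
        push_neg at hcon
        have : ‖μ s₀‖ ≤ M - 3*δ/4 :=
          (μ s₀).opNorm_le_bound (by linarith) (fun g => hcon g)
        linarith
      have hgne : g ≠ 0 := by
        intro h0
        rw [h0] at hg
        simp at hg
      have hgn : (0:ℝ) < ‖g‖ := norm_pos_iff.mpr hgne
      set r : ℝ := (M - 7*δ/8)/(M - 3*δ/4) with hr
      have hden : (0:ℝ) < M - 3*δ/4 := by linarith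
      have hrpos : 0 < r := div_pos (by linarith) hden
      have hrlt : r < 1 := (div_lt_one hden).mpr (by linarith)
      set g1 : C(K, ℂ) := ((r/‖g‖ : ℝ) : ℂ) • g with hg1
      have hg1norm : ‖g1‖ = r := by
        rw [hg1, norm_smul, Complex.norm_real, Real.norm_eq_abs,
          _root_.abs_of_nonneg (by positivity), div_mul_cancel₀ _ hgn.ne']
      have hTg1 : M - 7*δ/8 < ‖μ s₀ g1‖ := by
        have e1 : μ s₀ g1 = ((r/‖g‖ : ℝ) : ℂ) * μ s₀ g := by
          rw [hg1, (μ s₀).map_smul, smul_eq_mul]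
        rw [e1, norm_mul, Complex.norm_real, Real.norm_eq_abs,
          _root_.abs_of_nonneg (by positivity : (0:ℝ) ≤ r/‖g‖)]
        have e2 : M - 7*δ/8 = r * (M - 3*δ/4) := by
          rw [hr, div_mul_cancel₀ _ hden.ne']
        have e3 : r * (M - 3*δ/4) = (r/‖g‖) * ((M - 3*δ/4) * ‖g‖) := by
          field_simp
        rw [e2, e3]
        exact mul_lt_mul_of_pos_left hg (by positivity)
      set w : ℂ := μ s₀ g1 with hw
      have hwne : w ≠ 0 := by
        intro h0
        rw [h0] at hTg1
        simp at hTg1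
        linarith
      have habsw : (0:ℝ) < ‖w‖ := norm_pos_iff.mpr hwne
      set c : ℂ := (starRingEnd ℂ) w / ((‖w‖ : ℝ) : ℂ) with hc
      have hcnorm : ‖c‖ = 1 := by
        rw [hc, norm_div, Complex.norm_conj, Complex.norm_real,
          Real.norm_eq_abs, _root_.abs_of_nonneg habsw.le, div_self habsw.ne']
      refine ⟨s₀, c • g1, ?_, ?_⟩
      · rw [norm_smul, hg1norm, hcnorm, one_mul]; exact hrlt
      · have hTf : μ s₀ (c • g1) = ((‖w‖ : ℝ) : ℂ) := by
          rw [(μ s₀).map_smul, smul_eq_mul, ← hw, hc, div_mul_eq_mul_div,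
            mul_comm ((starRingEnd ℂ) w) w, Complex.mul_conj, Complex.normSq_eq_norm_sq]
          push_cast
          rw [pow_two, mul_div_assoc, div_self (by exact_mod_cast habsw.ne'), mul_one]
        rw [hTf]
        simp only [Complex.ofReal_re]
        linarith
  obtain ⟨s₀, f, hfn, hfre⟩ := claim
  obtain ⟨h, hh1, hh2⟩ := exists_unimodular_re_ge (μ s₀) f hfn
  refine ⟨h, {s | M - δ < (μ s h).re}, hh1, ?_, ⟨s₀, by simp only [Set.mem_setOf_eq]; linarith⟩,
    fun s hs => hs⟩
  exact isOpen_lt continuous_const (Complex.continuous_re.comp (hμ h))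
end

section
/- Let K, S be compact Hausdorff spaces and (ν_n) a sequence of weak-star continuous maps S → M(K) converging in the supremum (total variation) norm to ν_∞. Suppose there exist points s_n ∈ S and ε_n → 0 with Re ν_n(s_n)(K) > ‖ν_n‖ − ε_n for each n. Then sup_{s∈S} |ν_∞(s)(K)| = ‖ν_∞‖; i.e., the operator represented by ν_∞ attains its norm at the constant function 1. -/
open Filter Topology

lemma bdd_of_weakstar_cont {K S : Type*} [TopologicalSpace K] [CompactSpace K] [T2Space K]
    [TopologicalSpace S] [CompactSpace S]
    (μ : S → (C(K, ℂ) →L[ℂ] ℂ)) (h : ∀ f : C(K, ℂ), Continuous fun s => μ s f) :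
    BddAbove (Set.range fun s => ‖μ s‖) := by
  have hpt : ∀ f : C(K, ℂ), ∃ C, ∀ s, ‖μ s f‖ ≤ C := by
    intro f
    obtain ⟨C, hC⟩ := (isCompact_range (h f).norm).bddAbove
    exact ⟨C, fun s => hC (Set.mem_range_self s)⟩
  obtain ⟨C', hC'⟩ := banach_steinhaus hpt
  exact ⟨C', by rintro x ⟨s, rfl⟩; exact hC' s⟩

/-- Let `K, S` be compact Hausdorff spaces and `(ν_n)` a sequence of weak-star continuous maps
`S → M(K)` (with `M(K) = C(K)*` via Riesz) converging in the norm `‖ν‖ = sup_{s∈S} ‖ν(s)‖`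
to `ν_∞`.  If there exist points `s_n ∈ S` and `ε_n → 0` with
`Re ν_n(s_n)(K) > ‖ν_n‖ − ε_n` for each `n` (where `ν(s)(K) = ν(s)(1)`), then
`sup_{s∈S} |ν_∞(s)(K)| = ‖ν_∞‖`, i.e. the operator represented by `ν_∞` attains its norm at
the constant function `1`. -/
theorem limit_attains_at_one
    {K S : Type*} [TopologicalSpace K] [CompactSpace K] [T2Space K]
    [TopologicalSpace S] [CompactSpace S] [T2Space S] [Nonempty S]
    (ν : ℕ → S → (C(K, ℂ) →L[ℂ] ℂ)) (νinf : S → (C(K, ℂ) →L[ℂ] ℂ))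
    (hν : ∀ n, ∀ f : C(K, ℂ), Continuous fun s => ν n s f)
    (hνinf : ∀ f : C(K, ℂ), Continuous fun s => νinf s f)
    (hconv : Tendsto (fun n => ⨆ s : S, ‖ν n s - νinf s‖) atTop (𝓝 0))
    (s' : ℕ → S) (ε : ℕ → ℝ) (hε : Tendsto ε atTop (𝓝 0))
    (hatt : ∀ n, (ν n (s' n) 1).re > (⨆ s : S, ‖ν n s‖) - ε n) :
    (⨆ s : S, ‖(νinf s) 1‖) = ⨆ s : S, ‖νinf s‖ := by
  have hone : ‖(1 : C(K, ℂ))‖ ≤ 1 := by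
    rw [ContinuousMap.norm_le _ zero_le_one]; intro x; simp
  have hBinf : BddAbove (Set.range fun s => ‖νinf s‖) := bdd_of_weakstar_cont νinf hνinf
  have hBn : ∀ n, BddAbove (Set.range fun s => ‖ν n s‖) :=
    fun n => bdd_of_weakstar_cont (ν n) (hν n)
  have hBd : ∀ n, BddAbove (Set.range fun s => ‖ν n s - νinf s‖) := by
    intro n
    exact bdd_of_weakstar_cont _ (fun f => ((hν n f).sub (hνinf f)))
  set δ : ℕ → ℝ := fun n => ⨆ s : S, ‖ν n s - νinf s‖ with hδ
  have hδle : ∀ n s, ‖ν n s - νinf s‖ ≤ δ n := fun n s => le_ciSup (hBd n) s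
  set B : ℝ := ⨆ s : S, ‖(νinf s) 1‖ with hB
  set A : ℝ := ⨆ s : S, ‖νinf s‖ with hA
  -- pointwise bound: |νinf s 1| ≤ ‖νinf s‖ ≤ A
  have habs_le : ∀ s, ‖(νinf s) 1‖ ≤ ‖νinf s‖ := by
    intro s
    calc ‖(νinf s) 1‖ = ‖(νinf s) 1‖ := rfl
      _ ≤ ‖νinf s‖ * ‖(1 : C(K, ℂ))‖ := (νinf s).le_opNorm 1
      _ ≤ ‖νinf s‖ * 1 := by
          exact mul_le_mul_of_nonneg_left hone (norm_nonneg _)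
      _ = ‖νinf s‖ := mul_one _
  have hBA : B ≤ A := ciSup_le fun s => (habs_le s).trans (le_ciSup hBinf s)
  have hAB : A ≤ B := by
    have key : ∀ n, A ≤ B + (ε n + 2 * δ n) := by
      intro n
      have h1 : A ≤ (⨆ s : S, ‖ν n s‖) + δ n := by
        apply ciSup_le
        intro s
        have : ‖νinf s‖ ≤ ‖ν n s‖ + ‖ν n s - νinf s‖ := by
          simpa [norm_sub_rev] using (norm_le_insert' (νinf s) (ν n s))
        exact this.trans (add_le_add (le_ciSup (hBn n) s) (hδle n s))
      have h2 : (⨆ s : S, ‖ν n s‖) ≤ (ν n (s' n) 1).re + ε n := by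
        linarith [hatt n]
      have h3 : (ν n (s' n) 1).re ≤ (νinf (s' n) 1).re + δ n := by
        have hd : ‖(ν n (s' n)) 1 - (νinf (s' n)) 1‖ ≤ δ n := by
          calc ‖(ν n (s' n)) 1 - (νinf (s' n)) 1‖
              = ‖(ν n (s' n) - νinf (s' n)) 1‖ := by
                simp
            _ ≤ ‖ν n (s' n) - νinf (s' n)‖ * ‖(1 : C(K, ℂ))‖ :=
                (ν n (s' n) - νinf (s' n)).le_opNorm 1
            _ ≤ ‖ν n (s' n) - νinf (s' n)‖ * 1 :=
                mul_le_mul_of_nonneg_left hone (norm_nonneg _)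
            _ = ‖ν n (s' n) - νinf (s' n)‖ := mul_one _
            _ ≤ δ n := hδle n _
        have hre : (ν n (s' n) 1).re - (νinf (s' n) 1).re ≤
            ‖(ν n (s' n)) 1 - (νinf (s' n)) 1‖ := by
          calc (ν n (s' n) 1).re - (νinf (s' n) 1).re
              = ((ν n (s' n)) 1 - (νinf (s' n)) 1).re := by simp
            _ ≤ |((ν n (s' n)) 1 - (νinf (s' n)) 1).re| := le_abs_self _
            _ ≤ ‖(ν n (s' n)) 1 - (νinf (s' n)) 1‖ := Complex.abs_re_le_norm _
        linarith
      have h4 : (νinf (s' n) 1).re ≤ B := by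
        have : (νinf (s' n) 1).re ≤ ‖(νinf (s' n)) 1‖ := by
          calc (νinf (s' n) 1).re ≤ |(νinf (s' n) 1).re| := le_abs_self _
            _ ≤ _ := Complex.abs_re_le_norm _
        exact this.trans (le_ciSup (f := fun s : S => ‖(νinf s) 1‖) ⟨A, by rintro x ⟨s, rfl⟩; exact (habs_le s).trans (le_ciSup hBinf s)⟩ (s' n))
      linarith
    have hlim : Tendsto (fun n => B + (ε n + 2 * δ n)) atTop (𝓝 (B + (0 + 2 * 0))) := by
      exact tendsto_const_nhds.add (hε.add (hconv.const_mul 2))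
    have : A ≤ B + (0 + 2 * 0) := ge_of_tendsto hlim (Eventually.of_forall key)
    simpa using this
  linarith
end
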